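/- arXiv:1007.1760 — 7 statements merged into one kernel-verified Lean document; each statement's English description precedes it below -/
import Mathlib

section
/- Let π be a permutation of {1,…,n} and let M = {π(j) − i : 1 ≤ i < j ≤ n, π(i) > π(j)} (a finite set of integers), with m = |M|. Then there exist m permutations ρ¹, ρ², …, ρᵐ of {1,…,n}, each of bandwidth 1, such that π = ρ¹ ∘ ρ² ∘ ⋯ ∘ ρᵐ. -/
/-!
Let a threshold `g` sweep upward through `ℤ` and order the values `v` by the key
`min (2 π⁻¹(v)) (2 (v - g) - 1)` (the two branches have different parities, so the key is injective).
For `g ≤ -n` this is the order of positions, whose rank permutation is `π⁻¹`; for `g ≥ n` it is the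
order of values, whose rank permutation is `1`. Two values `w < u` swap only when `g` crosses
`w - π⁻¹(u)`, and only if `u` precedes `w` in `π`, so the swap point is an element of `M`. While `g`
crosses a single element `c` of `M`, a value `v` gains or loses at most one predecessor in each
direction, since the partner is determined by `c` and `v`; hence its rank moves by at most one, and
consecutive rank permutations differ by a factor of bandwidth one. Crossing the elements of `M` one at
a time telescopes `π = 1 * (π⁻¹)⁻¹` into `|M|` such factors.
-/

open Finset Equiv

section Factorization

variable {n : ℕ}

theorem Equiv.Perm.val_eq_card_filter_lt (e : Perm (Fin n)) (v : Fin n) :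
    (e v : ℕ) = #{w | e w < e v} := by
  rw [← Fin.card_Iio (e v), ← card_map e.symm.toEmbedding]
  congr 1
  ext w
  simp

def rankPerm {β : Type*} [LinearOrder β] (f : Fin n → β) : Perm (Fin n) :=
  (Tuple.sort f)⁻¹

section rankPerm

variable {β : Type*} [LinearOrder β] {f : Fin n → β}

theorem rankPerm_lt_rankPerm_iff (hf : Function.Injective f) {v w : Fin n} :
    rankPerm f w < rankPerm f v ↔ f w < f v := by
  have hmono : StrictMono (f ∘ Tuple.sort f) :=
    (Tuple.monotone_sort f).strictMono_of_injective (hf.comp (Tuple.sort f).injective)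
  conv_rhs => rw [← (Tuple.sort f).apply_symm_apply w, ← (Tuple.sort f).apply_symm_apply v]
  exact hmono.lt_iff_lt.symm

theorem val_rankPerm (hf : Function.Injective f) (v : Fin n) :
    (rankPerm f v : ℕ) = #{w | f w < f v} := by
  simp only [(rankPerm f).val_eq_card_filter_lt, rankPerm_lt_rankPerm_iff hf]

theorem rankPerm_eq_of_lt_iff (hf : Function.Injective f) {e : Perm (Fin n)}
    (h : ∀ v w, e w < e v ↔ f w < f v) : rankPerm f = e :=
  Equiv.ext fun v => Fin.ext <| by simp only [val_rankPerm hf, e.val_eq_card_filter_lt, h]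

end rankPerm

def HasBandwidth (w : ℕ) (ρ : Perm (Fin n)) : Prop :=
  ∀ i, |((ρ i : ℕ) : ℤ) - ((i : ℕ) : ℤ)| ≤ w

theorem hasBandwidth_mul_inv {w : ℕ} {e e' : Perm (Fin n)}
    (h : ∀ v, |((e' v : ℕ) : ℤ) - ((e v : ℕ) : ℤ)| ≤ w) : HasBandwidth w (e' * e⁻¹) := by
  intro i
  simpa using h (e⁻¹ i)

theorem exists_prod_ofFn_eq_mul_inv {G : Type*} [Group G] (R : ℤ → G) (P : G → Prop) (M : Set ℤ)
    (hconst : ∀ a b, a ≤ b → M ∩ Set.Ioc a b = ∅ → R b = R a)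
    (hstep : ∀ a b, a ≤ b → (M ∩ Set.Ioc a b).Subsingleton → P (R b * (R a)⁻¹))
    (S : Finset ℤ) :
    ∀ a b, a ≤ b → M ∩ Set.Ioc a b ⊆ S →
      ∃ ρ : Fin #S → G, (∀ j, P (ρ j)) ∧ R b * (R a)⁻¹ = (List.ofFn ρ).prod := by
  induction S using Finset.induction_on_max with
  | empty =>
    intro a b hab hS
    refine ⟨Fin.elim0, fun j => j.elim0, ?_⟩
    simp [hconst a b hab (Set.subset_empty_iff.mp (by simpa using hS))]
  | insert c s hlt ih =>
    intro a b hab hS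
    -- cut the window just below `c`, so that the upper part meets `M` at most in `c`
    set d := max a (min (c - 1) b)
    have hlow : M ∩ Set.Ioc a d ⊆ s := by
      rintro z ⟨hzM, hza, hzd⟩
      rcases Finset.mem_insert.mp (hS ⟨hzM, hza, by omega⟩) with rfl | hzs
      · omega
      · exact hzs
    have hhigh : M ∩ Set.Ioc d b ⊆ {c} := by
      rintro z ⟨hzM, hzd, hzb⟩
      rcases Finset.mem_insert.mp (hS ⟨hzM, by omega, hzb⟩) with rfl | hzs
      · rfl
      · have := hlt z hzs; omega
    obtain ⟨ρ, hρ, hprod⟩ := ih a d (by omega) hlow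
    rw [Finset.card_insert_of_notMem fun hc => lt_irrefl c (hlt c hc)]
    refine ⟨Fin.cons (R b * (R d)⁻¹) ρ, Fin.cases (hstep d b (by omega)
      (Set.subsingleton_singleton.anti hhigh)) hρ, ?_⟩
    rw [List.ofFn_succ, List.prod_cons]
    simp only [Fin.cons_zero, Fin.cons_succ, ← hprod]
    group

def inversionOffsets (π : Perm (Fin n)) : Finset ℤ :=
  Finset.image (fun p : Fin n × Fin n => ((π p.2 : ℕ) : ℤ) - ((p.1 : ℕ) : ℤ))
    (Finset.univ.filter fun p : Fin n × Fin n => p.1 < p.2 ∧ π p.2 < π p.1)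

theorem sub_mem_inversionOffsets {π : Perm (Fin n)} {u w : Fin n} (hwu : w < u)
    (hpos : π⁻¹ u < π⁻¹ w) : ((w : ℕ) : ℤ) - ((π⁻¹ u : Fin n) : ℕ) ∈ inversionOffsets π :=
  Finset.mem_image.mpr ⟨(π⁻¹ u, π⁻¹ w), by simpa using ⟨hpos, hwu⟩, by simp⟩

def sweepKey (π : Perm (Fin n)) (g : ℤ) (v : Fin n) : ℤ :=
  min (2 * ((π⁻¹ v : Fin n) : ℕ)) (2 * (v : ℕ) - 2 * g - 1)

section sweepKey

variable {π : Perm (Fin n)}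

theorem sweepKey_injective (g : ℤ) : Function.Injective (sweepKey π g) := by
  intro v w h
  have hpos : ((π⁻¹ v : Fin n) : ℕ) = (π⁻¹ w : Fin n) → v = w := fun h' =>
    π⁻¹.injective (Fin.ext h')
  unfold sweepKey at h
  exact Fin.ext (by omega)

theorem rankPerm_sweepKey_of_le {a : ℤ} (ha : a ≤ -n) : rankPerm (sweepKey π a) = π⁻¹ := by
  refine rankPerm_eq_of_lt_iff (sweepKey_injective a) fun v w => ?_
  have := v.isLt
  have := w.isLt
  have := (π⁻¹ v).isLt
  have := (π⁻¹ w).isLt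
  simp only [sweepKey, Fin.lt_def]
  omega

theorem rankPerm_sweepKey_of_ge {b : ℤ} (hb : n ≤ b) : rankPerm (sweepKey π b) = 1 := by
  refine rankPerm_eq_of_lt_iff (sweepKey_injective b) fun v w => ?_
  have := v.isLt
  have := w.isLt
  simp only [sweepKey, Fin.lt_def, Perm.one_apply]
  omega

theorem sweepKey_flip {a b : ℤ} (hab : a ≤ b) {u w : Fin n} (huw : u ≠ w)
    (ha : sweepKey π a u ≤ sweepKey π a w) (hb : sweepKey π b w ≤ sweepKey π b u) :
    w < u ∧ ((w : ℕ) : ℤ) - ((π⁻¹ u : Fin n) : ℕ) ∈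
      (inversionOffsets π : Set ℤ) ∩ Set.Ioc a b := by
  have hval : (u : ℕ) ≠ w := Fin.val_ne_of_ne huw
  have hpos : ((π⁻¹ u : Fin n) : ℕ) ≠ (π⁻¹ w : Fin n) :=
    Fin.val_ne_of_ne (π⁻¹.injective.ne huw)
  unfold sweepKey at ha hb
  have hwu : w < u := by rw [Fin.lt_def]; omega
  have hinv : π⁻¹ u < π⁻¹ w := by rw [Fin.lt_def]; omega
  exact ⟨hwu, sub_mem_inversionOffsets hwu hinv, by omega, by omega⟩

theorem rankPerm_sweepKey_eq {a b : ℤ} (hab : a ≤ b)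
    (hM : (inversionOffsets π : Set ℤ) ∩ Set.Ioc a b = ∅) :
    rankPerm (sweepKey π b) = rankPerm (sweepKey π a) := by
  have hflip {u w : Fin n} (huw : u ≠ w) (ha : sweepKey π a u ≤ sweepKey π a w)
      (hb : sweepKey π b w ≤ sweepKey π b u) : False := by
    simpa [hM] using (sweepKey_flip hab huw ha hb).2
  refine rankPerm_eq_of_lt_iff (sweepKey_injective b) fun v w => ?_
  rw [rankPerm_lt_rankPerm_iff (sweepKey_injective a)]
  constructor
  · intro h
    by_contra h'
    exact hflip (fun hwv => h.ne (congrArg _ hwv)) h.le (not_lt.mp h')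
  · intro h
    by_contra h'
    exact hflip (fun hvw => h.ne (congrArg _ hvw.symm)) (not_lt.mp h') h.le

theorem hasBandwidth_one_sweepKey {a b : ℤ} (hab : a ≤ b)
    (hM : ((inversionOffsets π : Set ℤ) ∩ Set.Ioc a b).Subsingleton) :
    HasBandwidth 1 (rankPerm (sweepKey π b) * (rankPerm (sweepKey π a))⁻¹) := by
  refine hasBandwidth_mul_inv fun v => ?_
  rw [val_rankPerm (sweepKey_injective b), val_rankPerm (sweepKey_injective a)]
  set A : Finset (Fin n) := {w | sweepKey π a w < sweepKey π a v}
  set B : Finset (Fin n) := {w | sweepKey π b w < sweepKey π b v}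
  have hBA : #(B \ A) ≤ 1 := by
    refine card_le_one.mpr fun x hx y hy => ?_
    simp only [A, B, mem_sdiff, mem_filter, mem_univ, true_and, not_lt] at hx hy
    have hx' := (sweepKey_flip hab (fun h => hx.1.ne (congrArg _ h.symm)) hx.2 hx.1.le).2
    have hy' := (sweepKey_flip hab (fun h => hy.1.ne (congrArg _ h.symm)) hy.2 hy.1.le).2
    exact Fin.ext (by have := hM hx' hy'; omega)
  have hAB : #(A \ B) ≤ 1 := by
    refine card_le_one.mpr fun x hx y hy => ?_
    simp only [A, B, mem_sdiff, mem_filter, mem_univ, true_and, not_lt] at hx hy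
    have hx' := (sweepKey_flip hab (fun h => hx.1.ne (congrArg _ h)) hx.1.le hx.2).2
    have hy' := (sweepKey_flip hab (fun h => hy.1.ne (congrArg _ h)) hy.1.le hy.2).2
    exact π⁻¹.injective (Fin.ext (by have := hM hx' hy'; omega))
  have := card_le_card_sdiff_add_card (s := A) (t := B)
  have := card_le_card_sdiff_add_card (s := B) (t := A)
  rw [abs_le]
  constructor <;> push_cast <;> omega

end sweepKey

end Factorization

/-- A permutation `π` of `{1,…,n}` (modeled as `Equiv.Perm (Fin n)`)
is a product of `m = |M|` permutations of bandwidth 1, where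
`M = {π(j) − i : i < j, π(i) > π(j)}`. -/
theorem strang_factorization_card_M (n : ℕ) (π : Equiv.Perm (Fin n)) (M : Finset ℤ)
    (hM : M = Finset.image (fun p : Fin n × Fin n => ((π p.2 : ℕ) : ℤ) - ((p.1 : ℕ) : ℤ))
      (Finset.univ.filter fun p : Fin n × Fin n => p.1 < p.2 ∧ π p.2 < π p.1)) :
    ∃ ρ : Fin M.card → Equiv.Perm (Fin n),
      (∀ j, ∀ i : Fin n, |(((ρ j) i : ℕ) : ℤ) - ((i : ℕ) : ℤ)| ≤ 1) ∧
      π = (List.ofFn ρ).prod := by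
  obtain ⟨ρ, hρ, hprod⟩ := exists_prod_ofFn_eq_mul_inv (fun g => rankPerm (sweepKey π g))
    (HasBandwidth 1) (inversionOffsets π) (fun _ _ => rankPerm_sweepKey_eq)
    (fun _ _ => hasBandwidth_one_sweepKey) M (-n) n (by omega) (hM ▸ Set.inter_subset_left)
  refine ⟨ρ, fun j i => by simpa using hρ j i, ?_⟩
  rw [← hprod, rankPerm_sweepKey_of_le le_rfl, rankPerm_sweepKey_of_ge le_rfl, one_mul, inv_inv]
end

section
/- Fix w ≥ 1 and n ≥ 2w, and let σ be the permutation of {1,…,n} defined by σ(i) = i + w for 1 ≤ i ≤ w, σ(i) = i − w for w+1 ≤ i ≤ 2w, and σ(i) = i for i > 2w. Then σ has bandwidth w, and whenever σ is written as a product of k permutations of bandwidth 1, necessarily k ≥ 2w − 1. -/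
/-! For a cut `c`, count the points `i ≤ c` that a permutation sends above `c`. This count is
subadditive under composition. A bandwidth-one permutation contributes at most one to the cuts
`c` and `c + 1` together, since if it moves `c` up to `c + 1` it must move `c + 1` back down to `c`.
But `σ` sends `w` points across the cut `w - 1` and `w - 1` points across the cut `w`, so any
factorization of `σ` into bandwidth-one permutations has at least `2w - 1` factors. -/

open Equiv Finset

namespace Equiv.Perm

variable {n : ℕ}

def HasBandwidth (w : ℕ) (π : Perm (Fin n)) : Prop :=
  ∀ i : Fin n, |((π i : ℕ) : ℤ) - ((i : ℕ) : ℤ)| ≤ (w : ℤ)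

namespace HasBandwidth

variable {w : ℕ} {π : Perm (Fin n)}

theorem apply_le (h : HasBandwidth w π) (i : Fin n) : (π i : ℕ) ≤ i + w := by
  have := abs_le.mp (h i); omega

theorem le_apply (h : HasBandwidth w π) (i : Fin n) : (i : ℕ) ≤ π i + w := by
  have := abs_le.mp (h i); omega

/-- The preimage of `x` is `x - 1`, `x` or `x + 1`, and `x - 1` is excluded by the same statement
one step down. -/
theorem apply_eq_of_apply_eq_succ {ρ : Perm (Fin n)} (hρ : HasBandwidth 1 ρ) :
    ∀ {x y : Fin n}, (y : ℕ) = x + 1 → ρ x = y → ρ y = x := by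
  suffices ∀ c : ℕ, ∀ x y : Fin n, (x : ℕ) = c → (y : ℕ) = c + 1 → ρ x = y → ρ y = x from
    fun {_ _} hy hxy => this _ _ _ rfl hy hxy
  intro c
  induction c using Nat.strong_induction_on with
  | _ c ih =>
  intro x y hx hy hxy
  obtain ⟨z, hz⟩ : ∃ z, ρ z = x := ⟨ρ.symm x, ρ.apply_symm_apply x⟩
  have hz_le := hρ.apply_le z
  have hz_ge := hρ.le_apply z
  rw [hz] at hz_le hz_ge
  have hzx : z ≠ x := fun h => by
    subst h
    have := congrArg Fin.val (hz.symm.trans hxy)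
    omega
  rcases Nat.lt_or_ge (z : ℕ) c with hlt | hge
  · have hρx := ih z (by omega) z x rfl (by omega) hz
    have := congrArg Fin.val (hρx.symm.trans hxy)
    omega
  · have hzy : z = y := Fin.ext (by have := Fin.val_ne_of_ne hzx; omega)
    rwa [← hzy]

end HasBandwidth

def upCrossings (c : ℕ) (π : Perm (Fin n)) : Finset (Fin n) :=
  {i | (i : ℕ) ≤ c ∧ c < π i}

theorem mem_upCrossings {c : ℕ} {π : Perm (Fin n)} {i : Fin n} :
    i ∈ π.upCrossings c ↔ (i : ℕ) ≤ c ∧ c < π i := by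
  simp [upCrossings]

/-- A point carried across the gap by `ρ * π` is carried across it by `π`, or `π` takes it to a
point that `ρ` carries across. -/
theorem card_upCrossings_mul_le (c : ℕ) (ρ π : Perm (Fin n)) :
    #((ρ * π).upCrossings c) ≤ #(π.upCrossings c) + #(ρ.upCrossings c) := by
  calc #((ρ * π).upCrossings c)
      ≤ #(π.upCrossings c ∪ (ρ.upCrossings c).map π.symm.toEmbedding) := by
        refine card_le_card fun i hi => ?_
        rw [mem_upCrossings, mul_apply] at hi
        by_cases hπi : c < π i
        · exact mem_union_left _ (mem_upCrossings.mpr ⟨hi.1, hπi⟩)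
        · refine mem_union_right _ (mem_map.mpr ⟨π i, mem_upCrossings.mpr ⟨by omega, hi.2⟩, ?_⟩)
          simp
    _ ≤ #(π.upCrossings c) + #(ρ.upCrossings c) := by
        grw [card_union_le, card_map]

theorem card_upCrossings_prod_le (c : ℕ) (l : List (Perm (Fin n))) :
    #(l.prod.upCrossings c) ≤ (l.map fun ρ => #(ρ.upCrossings c)).sum := by
  induction l with
  | nil =>
    suffices (1 : Perm (Fin n)).upCrossings c = ∅ by simp [this]
    refine eq_empty_of_forall_notMem fun i hi => ?_
    have := mem_upCrossings.mp hi
    rw [one_apply] at this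
    omega
  | cons ρ l ih =>
    rw [List.prod_cons, List.map_cons, List.sum_cons]
    grw [card_upCrossings_mul_le, ih]
    omega

theorem HasBandwidth.card_upCrossings_add_card_upCrossings_succ_le_one {ρ : Perm (Fin n)}
    (hρ : HasBandwidth 1 ρ) (c : ℕ) :
    #(ρ.upCrossings c) + #(ρ.upCrossings (c + 1)) ≤ 1 := by
  have val_eq : ∀ c, ∀ x ∈ ρ.upCrossings c, (x : ℕ) = c := fun c x hx => by
    have := mem_upCrossings.mp hx
    have := hρ.apply_le x
    omega
  have card_le_one : ∀ c, #(ρ.upCrossings c) ≤ 1 := fun c =>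
    Finset.card_le_one.mpr fun x hx y hy => Fin.ext ((val_eq c x hx).trans (val_eq c y hy).symm)
  rcases (ρ.upCrossings c).eq_empty_or_nonempty with hempty | ⟨x, hx⟩
  · simpa [hempty] using card_le_one (c + 1)
  · suffices ρ.upCrossings (c + 1) = ∅ by simpa [this] using card_le_one c
    refine eq_empty_of_forall_notMem fun y hy => ?_
    have hxc := val_eq c x hx
    have hyc := val_eq (c + 1) y hy
    have hρx : ρ x = y := Fin.ext (by
      have := (mem_upCrossings.mp hx).2
      have := hρ.apply_le x
      omega)
    have := (mem_upCrossings.mp hy).2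
    rw [hρ.apply_eq_of_apply_eq_succ (by omega) hρx] at this
    omega

theorem le_card_upCrossings {c a b : ℕ} {π : Perm (Fin n)} (hbc : b ≤ c + 1) (hbn : b ≤ n)
    (h : ∀ i : Fin n, a ≤ i → (i : ℕ) < b → c < π i) :
    b - a ≤ #(π.upCrossings c) := by
  have hlt : ∀ m ∈ Ico a b, m < n := fun m hm => by have := mem_Ico.mp hm; omega
  calc b - a = #((Ico a b).attachFin hlt) := by simp
    _ ≤ #(π.upCrossings c) := card_le_card fun i hi => by
        have := mem_Ico.mp (mem_attachFin hlt |>.mp hi)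
        exact mem_upCrossings.mpr ⟨by omega, h i this.1 this.2⟩

end Equiv.Perm

/-- for `w ≥ 1`, `n ≥ 2w`, the permutation `σ` sending
`i ↦ i + w` for the first `w` values, `i ↦ i − w` for the next `w` values,
and fixing everything else, has bandwidth `w` and cannot be written as a
product of fewer than `2w − 1` permutations of bandwidth 1.
(Indices are 0-based: `Fin n` models `{1,…,n}`.) -/
theorem extreme_permutation_lower_bound (n w : ℕ) (hw : 1 ≤ w) (hn : 2 * w ≤ n)
    (σ : Equiv.Perm (Fin n))
    (hσ : ∀ i : Fin n, ((σ i : ℕ) : ℤ) =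
      if (i : ℕ) < w then ((i : ℕ) : ℤ) + w
      else if (i : ℕ) < 2 * w then ((i : ℕ) : ℤ) - w
      else ((i : ℕ) : ℤ)) :
    (∀ i : Fin n, |((σ i : ℕ) : ℤ) - ((i : ℕ) : ℤ)| ≤ (w : ℤ)) ∧
    ∀ (k : ℕ) (ρ : Fin k → Equiv.Perm (Fin n)),
      (∀ j, ∀ i : Fin n, |(((ρ j) i : ℕ) : ℤ) - ((i : ℕ) : ℤ)| ≤ 1) →
      σ = (List.ofFn ρ).prod → 2 * w - 1 ≤ k := by
  refine ⟨fun i => ?_, fun k ρ hρ hprod => ?_⟩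
  · rw [hσ i]
    split_ifs <;> rw [abs_le] <;> constructor <;> omega
  obtain ⟨c, rfl⟩ : ∃ c, w = c + 1 := ⟨w - 1, by omega⟩
  have hσ_up (i : Fin n) (hi : (i : ℕ) < c + 1) : (σ i : ℕ) = i + (c + 1) := by
    have := hσ i
    rw [if_pos hi] at this
    omega
  calc 2 * (c + 1) - 1
      ≤ #(σ.upCrossings c) + #(σ.upCrossings (c + 1)) := by
        have h₀ := Perm.le_card_upCrossings (π := σ) (c := c) (a := 0) (b := c + 1)
          le_rfl (by omega) fun i _ hi => by rw [hσ_up i hi]; omega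
        have h₁ := Perm.le_card_upCrossings (π := σ) (c := c + 1) (a := 1) (b := c + 1)
          (by omega) (by omega) fun i _ hi => by rw [hσ_up i hi]; omega
        omega
    _ ≤ ∑ j, (#((ρ j).upCrossings c) + #((ρ j).upCrossings (c + 1))) := by
        rw [sum_add_distrib, hprod]
        grw [Perm.card_upCrossings_prod_le c, Perm.card_upCrossings_prod_le (c + 1)]
        simp only [List.map_ofFn, List.sum_ofFn, Function.comp_def, le_refl]
    _ ≤ ∑ _j : Fin k, 1 :=
        sum_le_sum fun j _ =>
          Perm.HasBandwidth.card_upCrossings_add_card_upCrossings_succ_le_one (hρ j) c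
    _ = k := by simp
end

section
/- Let π be a permutation of {1,…,n} and suppose π is a product of k permutations of bandwidth 1. Then there exist permutations ρ¹, …, ρᵏ of {1,…,n}, each of bandwidth 1, with π = ρ¹ ∘ ⋯ ∘ ρᵏ and such that the sum over i of the number of transpositions composing ρⁱ (i.e., the sum over i of half the number of non-fixed points of ρⁱ) equals the number of inversions of π, i.e., the number of pairs (i, j) with i < j and π(i) > π(j). -/
/-!
A permutation of bandwidth one is an involution, a product of disjoint adjacent transpositions
`(i, ρ i)`. Multiplying `w` on the right by such a `ρ` adds exactly one inversion per
transposition, provided `w` keeps each swapped pair in order. If in a factorization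
`A ++ ρ :: B` the prefix `A` inverts a pair `(a, b)` swapped by `ρ`, follow `(a, b)` back
through `A` to the factor `σ` that inverts it first; deleting that transposition from both `σ`
and `ρ` keeps the product and all bandwidths, and lowers the number of transpositions by two.
Repeating this until no such cancellation is left gives a factorization in which the number of
transpositions is the number of inversions.
-/

open Equiv Finset

variable {n : ℕ} {ρ : Perm (Fin n)}

def IsBandwidthOne (ρ : Perm (Fin n)) : Prop :=
  ∀ i : Fin n, |((ρ i : ℕ) : ℤ) - ((i : ℕ) : ℤ)| ≤ 1

namespace IsBandwidthOne

lemma val_apply_le (h : IsBandwidthOne ρ) (i : Fin n) : (ρ i : ℕ) ≤ i + 1 ∧ (i : ℕ) ≤ ρ i + 1 := by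
  have := h i
  rw [abs_le] at this
  omega

lemma inv (h : IsBandwidthOne ρ) : IsBandwidthOne ρ⁻¹ := fun i => by
  simpa [abs_sub_comm] using h (ρ⁻¹ i)

lemma apply_apply_of_apply_add_one (h : IsBandwidthOne ρ) {i : Fin n}
    (hi : (ρ i : ℕ) + 1 = i) : ρ (ρ i) = i := by
  induction i using WellFoundedLT.induction with
  | _ i ih =>
    -- otherwise `ρ` steps down again at `ρ i`, and the induction hypothesis there
    -- contradicts injectivity
    by_contra hne
    have hρi : ρ (ρ i) ≠ ρ i := fun e => by
      have := congrArg Fin.val (ρ.injective e)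
      omega
    have hdown : (ρ (ρ i) : ℕ) + 1 = ρ i := by
      have := h.val_apply_le (ρ i)
      have := Fin.val_ne_of_ne hne
      have := Fin.val_ne_of_ne hρi
      omega
    exact hne (ρ.injective (ih (ρ i) (Fin.lt_def.2 (by omega)) hdown))

lemma involutive (h : IsBandwidthOne ρ) : Function.Involutive ρ := fun i => by
  have := h.val_apply_le i
  rcases show (ρ i : ℕ) = i ∨ (ρ i : ℕ) + 1 = i ∨ (i : ℕ) + 1 = ρ i by omega with
    hfix | hdown | hup
  · rw [Fin.ext hfix, Fin.ext hfix]
  · exact h.apply_apply_of_apply_add_one hdown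
  · -- an upward step of `ρ` is a downward step of `ρ⁻¹`
    have := h.inv.apply_apply_of_apply_add_one (i := ρ i) (by simpa using hup)
    rw [Perm.inv_eq_iff_eq] at this
    simpa using this.symm

lemma apply_eq_of_apply_eq (h : IsBandwidthOne ρ) {i j : Fin n} (hij : ρ i = j) : ρ j = i :=
  hij ▸ h.involutive i

lemma symm_apply (h : IsBandwidthOne ρ) (i : Fin n) : ρ.symm i = ρ i :=
  ρ.symm_apply_eq.2 (h.involutive i).symm

lemma apply_eq_of_lt_of_apply_lt (h : IsBandwidthOne ρ) {i j : Fin n} (hij : i < j)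
    (hρ : ρ j < ρ i) : ρ i = j := by
  have := h.val_apply_le i
  have := h.val_apply_le j
  rw [Fin.lt_def] at hij hρ
  exact Fin.ext (by omega)

end IsBandwidthOne

def swapPairs (ρ : Perm (Fin n)) : Finset (Fin n × Fin n) :=
  {p | p.1 < p.2 ∧ ρ p.1 = p.2}

def inversions (π : Perm (Fin n)) : Finset (Fin n × Fin n) :=
  {p | p.1 < p.2 ∧ π p.2 < π p.1}

@[simp]
lemma mem_swapPairs {p : Fin n × Fin n} : p ∈ swapPairs ρ ↔ p.1 < p.2 ∧ ρ p.1 = p.2 := by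
  simp [swapPairs]

@[simp]
lemma mem_inversions {π : Perm (Fin n)} {p : Fin n × Fin n} :
    p ∈ inversions π ↔ p.1 < p.2 ∧ π p.2 < π p.1 := by
  simp [inversions]

@[simp]
lemma inversions_one : inversions (1 : Perm (Fin n)) = ∅ := by
  ext p
  simpa using le_of_lt

lemma card_swapPairs (ρ : Perm (Fin n)) : #(swapPairs ρ) = #{i | i < ρ i} :=
  card_nbij' Prod.fst (fun i => (i, ρ i))
    (fun p hp => by simp_all)
    (fun i hi => by simp_all)
    (fun p hp => by simp_all)
    (fun i _ => rfl)

lemma IsBandwidthOne.card_filter_apply_ne (h : IsBandwidthOne ρ) :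
    #{i | ρ i ≠ i} = 2 * #(swapPairs ρ) := by
  have hdisj : Disjoint (univ.filter fun i => i < ρ i) (univ.filter fun i => ρ i < i) :=
    disjoint_filter.2 fun i _ hlt hgt => lt_asymm hlt hgt
  have hsplit : #{i | ρ i ≠ i} = #{i | i < ρ i} + #{i | ρ i < i} := by
    rw [← card_union_of_disjoint hdisj, ← filter_or]
    simp only [ne_iff_lt_or_gt, or_comm]
  have hdown : #{i | ρ i < i} = #{i | i < ρ i} :=
    card_nbij' ρ ρ
      (fun i hi => by simp_all [h.involutive i])
      (fun i hi => by simp_all [h.involutive i])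
      (fun i _ => h.involutive i)
      (fun i _ => h.involutive i)
  rw [hsplit, hdown, card_swapPairs]
  omega

lemma inversions_mul (hρ : IsBandwidthOne ρ) {w : Perm (Fin n)}
    (hw : ∀ p ∈ swapPairs ρ, w p.1 < w p.2) :
    inversions (w * ρ) = (inversions w).map (ρ.prodCongr ρ).toEmbedding ∪ swapPairs ρ := by
  ext ⟨i, j⟩
  simp only [mem_union, mem_map_equiv, prodCongr_symm, prodCongr_apply, Prod.map,
    hρ.symm_apply, mem_inversions, mem_swapPairs, Perm.mul_apply]
  constructor
  · rintro ⟨hij, hinv⟩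
    rcases lt_or_gt_of_ne (ρ.injective.ne hij.ne) with hlt | hgt
    · exact Or.inl ⟨hlt, hinv⟩
    · exact Or.inr ⟨hij, hρ.apply_eq_of_lt_of_apply_lt hij hgt⟩
  · rintro (⟨hlt, hinv⟩ | ⟨hij, hρij⟩)
    · refine ⟨?_, hinv⟩
      by_contra hji
      have hji := lt_of_le_of_ne (not_lt.1 hji) fun e => hlt.ne' (congrArg ρ e)
      have hρji := hρ.apply_eq_of_lt_of_apply_lt hji hlt
      have hρij := hρ.apply_eq_of_apply_eq hρji
      have := hw (j, i) (mem_swapPairs.2 ⟨hji, hρji⟩)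
      rw [hρji, hρij] at hinv
      exact lt_asymm hinv this
    · refine ⟨hij, ?_⟩
      have := hw (i, j) (mem_swapPairs.2 ⟨hij, hρij⟩)
      have hρji := hρ.apply_eq_of_apply_eq hρij
      rwa [hρij, hρji]

lemma card_inversions_mul (hρ : IsBandwidthOne ρ) {w : Perm (Fin n)}
    (hw : ∀ p ∈ swapPairs ρ, w p.1 < w p.2) :
    #(inversions (w * ρ)) = #(inversions w) + #(swapPairs ρ) := by
  rw [inversions_mul hρ hw, card_union_of_disjoint, card_map]
  refine disjoint_left.2 fun ⟨i, j⟩ hinv hswap => ?_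
  simp only [mem_map_equiv, prodCongr_symm, prodCongr_apply, Prod.map, hρ.symm_apply,
    mem_inversions, mem_swapPairs] at hinv hswap
  obtain ⟨hij, hρij⟩ := hswap
  have hρji := hρ.apply_eq_of_apply_eq hρij
  rw [hρij, hρji] at hinv
  exact lt_asymm hij hinv.1

lemma IsBandwidthOne.mul_swap (h : IsBandwidthOne ρ) {a b : Fin n} (hab : ρ a = b) :
    IsBandwidthOne (ρ * swap a b) := fun i => by
  rw [Perm.mul_apply, swap_apply_def]
  split_ifs with ha hb
  · simp [ha, h.apply_eq_of_apply_eq hab]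
  · simp [hb, hab]
  · exact h i

lemma IsBandwidthOne.swapPairs_mul_swap (h : IsBandwidthOne ρ) {a b : Fin n}
    (hab : (a, b) ∈ swapPairs ρ) : swapPairs (ρ * swap a b) = (swapPairs ρ).erase (a, b) := by
  obtain ⟨hlt, hρa⟩ : a < b ∧ ρ a = b := mem_swapPairs.1 hab
  have hρb := h.apply_eq_of_apply_eq hρa
  ext ⟨i, j⟩
  simp only [mem_swapPairs, mem_erase, Perm.mul_apply, swap_apply_def, ne_eq, Prod.mk.injEq]
  split_ifs <;> grind

lemma mul_swap_eq_swap_mul_of_apply_eq {α : Type*} [DecidableEq α] {f : Perm α} {a b : α}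
    (hab : f a = b) (hba : f b = a) : f * swap a b = swap a b * f := by
  rw [mul_swap_eq_swap_mul, hab, hba, swap_comm]

def swapCount (L : List (Perm (Fin n))) : ℕ :=
  (L.map fun ρ => #(swapPairs ρ)).sum

/-- Every transposition of a factor creates a new inversion of the product of the factors
applied after it. -/
def NoCancellation (L : List (Perm (Fin n))) : Prop :=
  ∀ A ρ B, L = A ++ ρ :: B → ∀ p ∈ swapPairs ρ, A.prod p.1 < A.prod p.2

lemma card_inversions_prod_of_noCancellation {L : List (Perm (Fin n))}
    (hL : ∀ ρ ∈ L, IsBandwidthOne ρ) (hc : NoCancellation L) :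
    #(inversions L.prod) = swapCount L := by
  induction L using List.reverseRecOn with
  | nil => simp [swapCount]
  | append_singleton M ρ ih =>
    simp only [List.forall_mem_append, List.forall_mem_singleton] at hL
    have hcM : NoCancellation M := fun A σ B hM =>
      hc A σ (B ++ [ρ]) (by simp [hM])
    rw [List.prod_append, List.prod_singleton, card_inversions_mul hL.2 (hc M ρ [] rfl),
      ih hL.1 hcM]
    simp [swapCount]

lemma exists_mem_swapPairs_of_prod_lt {A : List (Perm (Fin n))}
    (hA : ∀ σ ∈ A, IsBandwidthOne σ) {a b : Fin n} (hab : a < b) (hba : A.prod b < A.prod a) :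
    ∃ C σ D, A = C ++ σ :: D ∧ (D.prod a, D.prod b) ∈ swapPairs σ := by
  induction A with
  | nil => exact absurd hab (not_lt.2 hba.le)
  | cons σ D ih =>
    simp only [List.forall_mem_cons] at hA
    rw [List.prod_cons, Perm.mul_apply, Perm.mul_apply] at hba
    rcases lt_or_gt_of_ne (D.prod.injective.ne hab.ne) with hlt | hgt
    · exact ⟨[], σ, D, rfl, mem_swapPairs.2 ⟨hlt, hA.1.apply_eq_of_lt_of_apply_lt hlt hba⟩⟩
    · obtain ⟨C, τ, D', rfl, hτ⟩ := ih hA.2 hgt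
      exact ⟨σ :: C, τ, D', rfl, hτ⟩

lemma exists_swapCount_add_two_of_not_noCancellation {L : List (Perm (Fin n))}
    (hL : ∀ ρ ∈ L, IsBandwidthOne ρ) (hc : ¬NoCancellation L) :
    ∃ L' : List (Perm (Fin n)), L'.length = L.length ∧ (∀ ρ ∈ L', IsBandwidthOne ρ) ∧
      L'.prod = L.prod ∧ swapCount L' + 2 = swapCount L := by
  simp only [NoCancellation, not_forall, not_lt, exists_prop] at hc
  obtain ⟨A, ρ, B, rfl, ⟨a, b⟩, hab, hba⟩ := hc
  simp only [List.forall_mem_append, List.forall_mem_cons] at hL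
  obtain ⟨hA, hρ, hB⟩ := hL
  obtain ⟨hlt, hρa⟩ : a < b ∧ ρ a = b := mem_swapPairs.1 hab
  obtain ⟨C, σ, D, rfl, hxy⟩ := exists_mem_swapPairs_of_prod_lt hA hlt
    (lt_of_le_of_ne hba (A.prod.injective.ne hlt.ne'))
  simp only [List.forall_mem_append, List.forall_mem_cons] at hA
  obtain ⟨hC, hσ, hD⟩ := hA
  refine ⟨C ++ σ * swap (D.prod a) (D.prod b) :: (D ++ ρ * swap a b :: B), by simp, ?_, ?_, ?_⟩
  · simp only [List.forall_mem_append, List.forall_mem_cons]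
    exact ⟨hC, hσ.mul_swap (mem_swapPairs.1 hxy).2, hD, hρ.mul_swap hρa, hB⟩
  · -- conjugated through `D.prod`, the transposition deleted from `σ` is `swap a b`, which
    -- commutes with `ρ`, so the two deletions cancel
    simp only [List.prod_append, List.prod_cons, swap_apply_apply,
      mul_swap_eq_swap_mul_of_apply_eq hρa (hρ.apply_eq_of_apply_eq hρa)]
    simp only [mul_assoc, inv_mul_cancel_left, swap_mul_self_mul]
  · have hσ' := card_erase_add_one hxy
    have hρ' := card_erase_add_one hab
    rw [← hσ.swapPairs_mul_swap hxy] at hσ'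
    rw [← hρ.swapPairs_mul_swap hab] at hρ'
    simp only [swapCount, List.map_append, List.map_cons, List.sum_append, List.sum_cons]
    omega

lemma exists_swapCount_eq_card_inversions (L : List (Perm (Fin n)))
    (hL : ∀ ρ ∈ L, IsBandwidthOne ρ) :
    ∃ L' : List (Perm (Fin n)), L'.length = L.length ∧ (∀ ρ ∈ L', IsBandwidthOne ρ) ∧
      L'.prod = L.prod ∧ swapCount L' = #(inversions L.prod) := by
  induction hm : swapCount L using Nat.strong_induction_on generalizing L with
  | _ m ih =>
    by_cases hc : NoCancellation L
    · exact ⟨L, rfl, hL, rfl, (card_inversions_prod_of_noCancellation hL hc).symm⟩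
    · obtain ⟨L₂, hlen, hL₂, hprod, hcount⟩ :=
        exists_swapCount_add_two_of_not_noCancellation hL hc
      obtain ⟨L', hlen', hL', hprod', hcount'⟩ := ih _ (by omega) L₂ hL₂ rfl
      exact ⟨L', hlen'.trans hlen, hL', hprod'.trans hprod, hprod ▸ hcount'⟩

/-- if `π` is a product of `k` bandwidth-1 permutations, then there
is such a factorization `π = ρ¹ ∘ ⋯ ∘ ρᵏ` in which the total number of
transpositions used (half the number of non-fixed points of each factor) equals
the number of inversions of `π`. -/
theorem reduced_bandwidth_one_factorization (n k : ℕ) (π : Equiv.Perm (Fin n))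
    (ρ₀ : Fin k → Equiv.Perm (Fin n))
    (hρ₀ : ∀ j, ∀ i : Fin n, |(((ρ₀ j) i : ℕ) : ℤ) - ((i : ℕ) : ℤ)| ≤ 1)
    (hπ₀ : π = (List.ofFn ρ₀).prod) :
    ∃ ρ : Fin k → Equiv.Perm (Fin n),
      (∀ j, ∀ i : Fin n, |(((ρ j) i : ℕ) : ℤ) - ((i : ℕ) : ℤ)| ≤ 1) ∧
      π = (List.ofFn ρ).prod ∧
      ∑ j : Fin k, (Finset.univ.filter fun i : Fin n => (ρ j) i ≠ i).card / 2 =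
        (Finset.univ.filter fun p : Fin n × Fin n => p.1 < p.2 ∧ π p.2 < π p.1).card := by
  obtain ⟨L, hlen, hL, hprod, hcount⟩ :=
    exists_swapCount_eq_card_inversions (List.ofFn ρ₀) (List.forall_mem_ofFn_iff.2 hρ₀)
  rw [List.length_ofFn] at hlen
  subst hlen
  have hbw (j : Fin L.length) : IsBandwidthOne (L.get j) := hL _ (L.get_mem j)
  refine ⟨L.get, hbw, by rw [List.ofFn_get, hπ₀, hprod], ?_⟩
  calc ∑ j, #{i | L.get j i ≠ i} / 2
      = ∑ j, #(swapPairs (L.get j)) := sum_congr rfl fun j _ => by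
        rw [(hbw j).card_filter_apply_ne, Nat.mul_div_cancel_left _ two_pos]
    _ = swapCount L := Fin.sum_univ_fun_getElem L fun ρ => #(swapPairs ρ)
    _ = #(inversions π) := by rw [hcount, hπ₀]
end

section
/- Let π be a permutation of {1,…,n} and let M = {π(j) − i : 1 ≤ i < j ≤ n, π(i) > π(j)}. Then there exist permutations σ^k of {1,…,n} of bandwidth 1, indexed by the integers k with −n+1 ≤ k ≤ n−1, such that π = σ^{−n+1} ∘ σ^{−n+2} ∘ ⋯ ∘ σ^{n−1} and σ^k is the identity whenever k ∉ M. -/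
/-!
Run `n` strands from position `π x` (time `1 - n`) to position `x` (time `n - 1`), ranking them
at time `m` by the height `max x (π x - m)`, ties broken by index; the ranking is the permutation
`wiring π m`. Between consecutive times a strand changes its relative order with at most one other
strand, so `wiring π m / wiring π (m + 1)` has bandwidth 1, and the product of these quotients
telescopes to `π`. Strands `i < j` swap between `m` and `m + 1` only if they form an inversion with
`π i - j = m`; a double count of the points of the permutation matrix right of the diagonal
`col - row = m` then yields an inversion `a < b` with `π b - a = m`.
-/

open Finset Function

namespace BandwidthFactorization

section Rank

variable {α β : Type*} [LinearOrder α] [LinearOrder β] {n : ℕ}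

def rank (f : Fin n → α) (x : Fin n) : ℕ := #{y | f y < f x}

lemma rank_lt (f : Fin n → α) (x : Fin n) : rank f x < n := by
  simpa [rank] using card_lt_card (filter_ssubset.mpr ⟨x, mem_univ x, lt_irrefl (f x)⟩)

lemma rank_lt_rank {f : Fin n → α} {x y : Fin n} (h : f y < f x) : rank f y < rank f x :=
  card_lt_card <| (ssubset_iff_of_subset fun z hz => by simp_all [lt_trans _ h]).mpr
    ⟨y, by simpa using h, by simp⟩

lemma rank_injective {f : Fin n → α} (hf : Injective f) : Injective (rank f) := by
  intro x y hxy
  by_contra hne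
  rcases lt_or_gt_of_ne (hf.ne hne) with h | h
  · exact (rank_lt_rank h).ne hxy
  · exact (rank_lt_rank h).ne' hxy

noncomputable def rankPerm (f : Fin n → α) (hf : Injective f) : Equiv.Perm (Fin n) :=
  Equiv.ofBijective (fun x => ⟨rank f x, rank_lt f x⟩)
    (Finite.injective_iff_bijective.mp fun _ _ h => rank_injective hf (Fin.val_eq_of_eq h))

@[simp] lemma rankPerm_apply_val (f : Fin n → α) (hf : Injective f) (x : Fin n) :
    (rankPerm f hf x : ℕ) = rank f x := rfl

lemma rank_congr {f : Fin n → α} {g : Fin n → β} {x : Fin n} (h : ∀ y, f y < f x ↔ g y < g x) :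
    rank f x = rank g x := by
  simp only [rank, h]

lemma rank_perm (e : Equiv.Perm (Fin n)) (x : Fin n) : rank e x = e x := by
  rw [rank, ← Fin.card_Iio (e x)]
  exact card_equiv e fun y => by simp

lemma rankPerm_eq_of_lt_iff {f : Fin n → α} (hf : Injective f) {e : Equiv.Perm (Fin n)}
    (h : ∀ x y, f y < f x ↔ e y < e x) : rankPerm f hf = e :=
  Equiv.ext fun x => Fin.ext <|
    (rankPerm_apply_val f hf x).trans ((rank_congr (h x)).trans (rank_perm e x))

lemma abs_rank_sub_rank_le_one {f : Fin n → α} {g : Fin n → β} {x : Fin n}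
    (h : {y | Xor (f y < f x) (g y < g x)}.Subsingleton) :
    |(rank f x : ℤ) - rank g x| ≤ 1 := by
  set A : Finset (Fin n) := {y | f y < f x}
  set B : Finset (Fin n) := {y | g y < g x}
  have hAB : #(A \ B) ≤ 1 := card_le_one.mpr fun a ha b hb => by
    simp only [A, B, mem_sdiff, mem_filter, mem_univ, true_and] at ha hb
    exact h (Or.inl ha) (Or.inl hb)
  have hBA : #(B \ A) ≤ 1 := card_le_one.mpr fun a ha b hb => by
    simp only [A, B, mem_sdiff, mem_filter, mem_univ, true_and] at ha hb
    exact h (Or.inr ha) (Or.inr hb)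
  have h1 := card_le_card_sdiff_add_card (s := A) (t := B)
  have h2 := card_le_card_sdiff_add_card (s := B) (t := A)
  change |((#A : ℕ) : ℤ) - #B| ≤ 1
  rw [abs_le]
  omega

end Rank

variable {n : ℕ}

lemma abs_div_apply_sub_le {ρ τ : Equiv.Perm (Fin n)} {d : ℤ}
    (h : ∀ x, |((ρ x : ℕ) : ℤ) - (τ x : ℕ)| ≤ d) (i : Fin n) :
    |((((ρ / τ) i : Fin n) : ℕ) : ℤ) - (i : ℕ)| ≤ d := by
  simpa [div_eq_mul_inv] using h (τ⁻¹ i)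

variable (π : Equiv.Perm (Fin n))

def height (m : ℤ) (x : Fin n) : ℤ := max ((x : ℕ) : ℤ) (((π x : ℕ) : ℤ) - m)

def wireKey (m : ℤ) (x : Fin n) : ℤ ×ₗ (Fin n)ᵒᵈ := toLex (height π m x, OrderDual.toDual x)

lemma wireKey_injective (m : ℤ) : Injective (wireKey π m) := fun x y h => by
  simpa [wireKey] using congrArg (fun p => OrderDual.ofDual (ofLex p).2) h

lemma wireKey_lt_wireKey_iff {m : ℤ} {x y : Fin n} :
    wireKey π m y < wireKey π m x ↔
      height π m y < height π m x ∨ height π m y = height π m x ∧ x < y := by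
  simp [wireKey, Prod.Lex.toLex_lt_toLex]

lemma wireKey_lt_wireKey_iff_of_lt {m : ℤ} {i j : Fin n} (hij : i < j) :
    wireKey π m j < wireKey π m i ↔ π j < π i ∧ m ≤ ((π i : ℕ) : ℤ) - (j : ℕ) := by
  have hπ : (π j : ℕ) ≠ π i := Fin.val_ne_of_ne (π.injective.ne hij.ne')
  rw [wireKey_lt_wireKey_iff, height, height, Fin.lt_def, Fin.lt_def]
  rw [Fin.lt_def] at hij
  omega

def IsCrossing (m : ℤ) (i j : Fin n) : Prop :=
  i < j ∧ π j < π i ∧ ((π i : ℕ) : ℤ) = (j : ℕ) + m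

lemma isCrossing_of_xor {m : ℤ} {x y : Fin n}
    (h : Xor (wireKey π m y < wireKey π m x) (wireKey π (m + 1) y < wireKey π (m + 1) x)) :
    IsCrossing π m x y ∨ IsCrossing π m y x := by
  rcases lt_trichotomy x y with hxy | rfl | hyx
  · rw [wireKey_lt_wireKey_iff_of_lt π hxy, wireKey_lt_wireKey_iff_of_lt π hxy, Xor] at h
    exact Or.inl ⟨hxy, by omega⟩
  · simp [Xor] at h
  · have hne (m' : ℤ) : wireKey π m' x ≠ wireKey π m' y := (wireKey_injective π m').ne hyx.ne'
    rw [lt_iff_not_ge, lt_iff_not_ge, (hne m).le_iff_lt, (hne (m + 1)).le_iff_lt, xor_not_not,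
      wireKey_lt_wireKey_iff_of_lt π hyx, wireKey_lt_wireKey_iff_of_lt π hyx, Xor] at h
    exact Or.inr ⟨hyx, by omega⟩

lemma crossing_partner_subsingleton (m : ℤ) (x : Fin n) :
    {y | IsCrossing π m x y ∨ IsCrossing π m y x}.Subsingleton := by
  intro y hy z hz
  simp only [IsCrossing, Set.mem_ofPred_eq, Fin.lt_def] at hy hz
  rcases hy with hy | hy <;> rcases hz with hz | hz
  · exact Fin.ext (by omega)
  · omega
  · omega
  · exact π.injective (Fin.ext (by omega))

noncomputable def wiring (m : ℤ) : Equiv.Perm (Fin n) :=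
  rankPerm (wireKey π m) (wireKey_injective π m)

lemma abs_wiring_sub_wiring_succ_le (m : ℤ) (x : Fin n) :
    |((wiring π m x : ℕ) : ℤ) - (wiring π (m + 1) x : ℕ)| ≤ 1 :=
  abs_rank_sub_rank_le_one <| (crossing_partner_subsingleton π m x).anti
    fun _ hy => isCrossing_of_xor π hy

lemma wiring_eq_wiring_succ {m : ℤ} (h : ∀ i j, ¬ IsCrossing π m i j) :
    wiring π m = wiring π (m + 1) :=
  Equiv.ext fun x => Fin.ext <| rank_congr fun y => by
    by_contra hxor
    rcases isCrossing_of_xor π ((xor_iff_not_iff _ _).mpr hxor) with hc | hc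
    exacts [h _ _ hc, h _ _ hc]

lemma wiring_of_le {m : ℤ} (hm : m ≤ 1 - n) : wiring π m = π :=
  rankPerm_eq_of_lt_iff _ fun x y => by
    have hπ : (π y : ℕ) = π x → (y : ℕ) = x := fun h => congrArg Fin.val (π.injective (Fin.ext h))
    have := x.isLt
    have := y.isLt
    rw [wireKey_lt_wireKey_iff, height, height, Fin.lt_def, Fin.lt_def]
    omega

lemma wiring_of_ge {m : ℤ} (hm : (n : ℤ) - 1 ≤ m) : wiring π m = 1 :=
  rankPerm_eq_of_lt_iff _ fun x y => by
    have := (π x).isLt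
    have := (π y).isLt
    rw [wireKey_lt_wireKey_iff, height, height, Equiv.Perm.one_apply, Equiv.Perm.one_apply,
      Fin.lt_def, Fin.lt_def]
    omega

/-- Both sides count the points `(r, π r)` strictly right of the diagonal `col - row = k`, by rows
and by columns, leaving out the rows and columns lying entirely right of the diagonal. -/
lemma card_right_of_diagonal_by_rows_eq_by_cols (k : ℤ) :
    #{r : Fin n | 0 ≤ (r : ℕ) + k ∧ (r : ℕ) + k < ((π r : ℕ) : ℤ)} =
      #{c : Fin n | (c : ℕ) - k < (n : ℤ) ∧ ((π.symm c : Fin n) : ℕ) + k < ((c : ℕ) : ℤ)} := by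
  have hall : #{r : Fin n | (r : ℕ) + k < ((π r : ℕ) : ℤ)} =
      #{c : Fin n | ((π.symm c : Fin n) : ℕ) + k < ((c : ℕ) : ℤ)} :=
    card_equiv π fun r => by simp
  have hout : #{r : Fin n | (r : ℕ) + k < (0 : ℤ)} = #{c : Fin n | (n : ℤ) ≤ (c : ℕ) - k} :=
    card_equiv Fin.revPerm fun r => by
      simp only [mem_filter, mem_univ, true_and, Fin.revPerm_apply, Fin.val_rev]
      omega
  have hrows : #{r : Fin n | (r : ℕ) + k < ((π r : ℕ) : ℤ)} =
      #{r : Fin n | 0 ≤ (r : ℕ) + k ∧ (r : ℕ) + k < ((π r : ℕ) : ℤ)} +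
        #{r : Fin n | (r : ℕ) + k < (0 : ℤ)} := by
    rw [← card_union_of_disjoint (disjoint_filter.mpr fun r _ h1 h2 => by omega)]
    congr 1
    ext r
    simp only [mem_filter, mem_univ, true_and, mem_union]
    omega
  have hcols : #{c : Fin n | ((π.symm c : Fin n) : ℕ) + k < ((c : ℕ) : ℤ)} =
      #{c : Fin n | (c : ℕ) - k < (n : ℤ) ∧ ((π.symm c : Fin n) : ℕ) + k < ((c : ℕ) : ℤ)} +
        #{c : Fin n | (n : ℤ) ≤ (c : ℕ) - k} := by
    rw [← card_union_of_disjoint (disjoint_filter.mpr fun r _ h1 h2 => by omega)]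
    congr 1
    ext c
    have := (π.symm c).isLt
    simp only [mem_filter, mem_univ, true_and, mem_union]
    omega
  omega

lemma exists_inversion_of_isCrossing {k : ℤ} {i j : Fin n} (h : IsCrossing π k i j) :
    ∃ a b : Fin n, a < b ∧ π b < π a ∧ ((π b : ℕ) : ℤ) - (a : ℕ) = k := by
  by_contra! hM
  obtain ⟨hij, hπ, hk⟩ := h
  rw [Fin.lt_def] at hij hπ
  set R : Finset (Fin n) := {r | 0 ≤ (r : ℕ) + k ∧ (r : ℕ) + k < ((π r : ℕ) : ℤ)}
  set C : Finset (Fin n) :=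
    {c | (c : ℕ) - k < (n : ℤ) ∧ ((π.symm c : Fin n) : ℕ) + k < ((c : ℕ) : ℤ)}
  have hval : Injective fun c : Fin n => ((c : ℕ) : ℤ) := fun a b h => Fin.ext (by simpa using h)
  have hmaps : Set.MapsTo (fun r : Fin n => ((r : ℕ) : ℤ) + k) R
      ((C.image fun c : Fin n => ((c : ℕ) : ℤ)).erase ((π i : ℕ) : ℤ)) := by
    intro r hr
    simp only [R, coe_filter, mem_univ, true_and, Set.mem_ofPred_eq] at hr
    have := (π r).isLt
    obtain ⟨c, hc⟩ : ∃ c : Fin n, ((c : ℕ) : ℤ) = (r : ℕ) + k :=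
      ⟨⟨((r : ℕ) + k).toNat, by omega⟩, by simp only; omega⟩
    have hcr : ((π.symm c : Fin n) : ℕ) < (r : ℕ) := by
      by_contra! hle
      have hne : r ≠ π.symm c := fun e => by
        rw [e, Equiv.apply_symm_apply] at hr
        omega
      have := hM r (π.symm c) (lt_of_le_of_ne hle hne)
      simp only [Equiv.apply_symm_apply, Fin.lt_def] at this
      omega
    have hrj : r ≠ j := by
      rintro rfl
      omega
    refine mem_coe.mpr (mem_erase.mpr ⟨by simp only; omega, mem_image.mpr ⟨c, ?_, hc⟩⟩)
    simp only [C, mem_filter, mem_univ, true_and]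
    omega
  have hmem : π i ∈ C := by
    simp only [C, mem_filter, mem_univ, true_and, Equiv.symm_apply_apply]
    omega
  have hle := card_le_card_of_injOn _ hmaps fun a _ b _ hab => Fin.ext (by simpa using hab)
  rw [card_erase_of_mem (mem_image_of_mem _ hmem), card_image_of_injective _ hval] at hle
  have hcard : #R = #C := card_right_of_diagonal_by_rows_eq_by_cols π k
  have := card_pos.mpr ⟨_, hmem⟩
  omega

end BandwidthFactorization

open BandwidthFactorization

/-- `π = σ^{−n+1} ∘ σ^{−n+2} ∘ ⋯ ∘ σ^{n−1}` where each `σ^k` has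
bandwidth 1 and `σ^k = 1` whenever `k ∉ M = {π(j) − i : i < j, π(i) > π(j)}`.
The product over `k = −n+1, …, n−1` (in increasing order of `k`) is expressed as
the product of the list `[σ(−n+1), …, σ(n−1)]`. -/
theorem diagonal_factorization (n : ℕ) (π : Equiv.Perm (Fin n)) (M : Finset ℤ)
    (hM : M = Finset.image (fun p : Fin n × Fin n => ((π p.2 : ℕ) : ℤ) - ((p.1 : ℕ) : ℤ))
      (Finset.univ.filter fun p : Fin n × Fin n => p.1 < p.2 ∧ π p.2 < π p.1)) :
    ∃ σ : ℤ → Equiv.Perm (Fin n),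
      (∀ k : ℤ, ∀ i : Fin n, |(((σ k) i : ℕ) : ℤ) - ((i : ℕ) : ℤ)| ≤ 1) ∧
      (∀ k : ℤ, k ∉ M → σ k = 1) ∧
      π = ((List.range (2 * n - 1)).map fun t => σ ((t : ℤ) - ((n : ℤ) - 1))).prod := by
  refine ⟨fun k => wiring π k / wiring π (k + 1),
    fun k => abs_div_apply_sub_le (abs_wiring_sub_wiring_succ_le π k), fun k hk => ?_, ?_⟩
  · refine div_eq_one.mpr (wiring_eq_wiring_succ π fun i j hc => hk ?_)
    obtain ⟨a, b, hab, hπ, rfl⟩ := exists_inversion_of_isCrossing π hc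
    rw [hM, mem_image]
    exact ⟨(a, b), by simp [hab, hπ], rfl⟩
  · have htel := List.prod_range_div' (2 * n - 1) fun t => wiring π ((t : ℤ) - ((n : ℤ) - 1))
    push_cast at htel
    rw [wiring_of_le π (by omega), wiring_of_ge π (by omega), div_one] at htel
    simpa only [bind_pure_comp, List.map_eq_map, List.map_map, comp_def, sub_add_eq_add_sub]
      using htel.symm
end

section
/- Let n ≥ 1, w ≥ 1, and let f : ℤ → ℤ be a bijection that is n-periodic (f(i + n) = f(i) + n for all i) and of bandwidth w (|f(i) − i| ≤ w for all i). Then there exist bijections σ¹, …, σ^{2w−1} of ℤ, each n-periodic, an involution, and of bandwidth 1, and an integer k with |k| ≤ w, such that f = σ¹ ∘ σ² ∘ ⋯ ∘ σ^{2w−1} ∘ Sᵏ, where S : ℤ → ℤ is the shift S(i) = i + 1. -/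
/-!
Sort `f` by repeatedly replacing `x` with `x ∘ τₓ`, where `τₓ` swaps every peak `i` of `x`
(`x (i - 1) < x i > x (i + 1)`) with `i + 1`; peaks are never adjacent, so `τₓ` is an
involution of bandwidth one, and it is `n`-periodic when `x` is. Give each inversion `a < b`,
`x b < x a`, the potential `(x a - x b) + #{a < k < b | x k < x a}`. Bandwidth `w` bounds it
by `2w - 1`, and every inversion of `x ∘ τₓ` has strictly smaller potential than some inversion
of `x`. So after `2w - 1` steps no inversion is left and we reach an increasing bijection of `ℤ`,
i.e. a shift `Sᵏ`; conjugating the `τ`'s by `Sᵏ` moves it to the right end of the product.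
Finally `∑_{0 ≤ r < n} (g r - r)` is additive on `n`-periodic bijections and vanishes on
involutions, so it equals `n k` for `f`, and bandwidth `w` gives `|k| ≤ w`.
-/

open Equiv Finset

namespace PeriodicStrang

section Peaks

variable {α : Type*} [Preorder α] (x : ℤ → α)

def IsPeak (i : ℤ) : Prop := x (i - 1) < x i ∧ x (i + 1) < x i

variable {x}

theorem IsPeak.not_isPeak_add_one {i : ℤ} (h : IsPeak x i) : ¬IsPeak x (i + 1) := fun h' =>
  lt_asymm h.2 (by simpa using h'.1)

variable (x) in
open Classical in
noncomputable def peakSwapFun (i : ℤ) : ℤ :=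
  if IsPeak x i then i + 1 else if IsPeak x (i - 1) then i - 1 else i

theorem peakSwapFun_of_isPeak {i : ℤ} (h : IsPeak x i) : peakSwapFun x i = i + 1 :=
  if_pos h

theorem peakSwapFun_of_isPeak_sub_one {i : ℤ} (h : IsPeak x (i - 1)) :
    peakSwapFun x i = i - 1 := by
  have : ¬IsPeak x i := by simpa using h.not_isPeak_add_one
  simp [peakSwapFun, this, h]

theorem peakSwapFun_of_not_isPeak {i : ℤ} (h : ¬IsPeak x i) (h' : ¬IsPeak x (i - 1)) :
    peakSwapFun x i = i := by
  simp [peakSwapFun, h, h']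

variable (x) in
theorem peakSwapFun_involutive : Function.Involutive (peakSwapFun x) := by
  intro i
  by_cases h : IsPeak x i
  · rw [peakSwapFun_of_isPeak h, peakSwapFun_of_isPeak_sub_one (by simpa using h),
      add_sub_cancel_right]
  by_cases h' : IsPeak x (i - 1)
  · rw [peakSwapFun_of_isPeak_sub_one h', peakSwapFun_of_isPeak h', sub_add_cancel]
  · rw [peakSwapFun_of_not_isPeak h h', peakSwapFun_of_not_isPeak h h']

variable (x) in
noncomputable def peakSwap : Perm ℤ := (peakSwapFun_involutive x).toPerm _

theorem peakSwap_apply (i : ℤ) : peakSwap x i = peakSwapFun x i := rfl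

theorem peakSwap_mul_self : peakSwap x * peakSwap x = 1 :=
  Perm.ext (peakSwapFun_involutive x)

@[simp]
theorem peakSwap_peakSwap (i : ℤ) : peakSwap x (peakSwap x i) = i :=
  peakSwapFun_involutive x i

theorem peakSwap_eq_iff {i j : ℤ} : peakSwap x i = j ↔ i = peakSwap x j :=
  (peakSwapFun_involutive x).eq_iff

theorem peakSwap_apply_le (i : ℤ) : peakSwap x i ≤ i + 1 := by
  rw [peakSwap_apply, peakSwapFun]; split_ifs <;> omega

theorem sub_one_le_peakSwap_apply (i : ℤ) : i - 1 ≤ peakSwap x i := by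
  rw [peakSwap_apply, peakSwapFun]; split_ifs <;> omega

theorem peakSwap_apply_le_self {i : ℤ} (h : ¬IsPeak x i) : peakSwap x i ≤ i := by
  rw [peakSwap_apply, peakSwapFun]; split_ifs <;> omega

theorem le_peakSwap_apply {i : ℤ} (h : ¬IsPeak x (i - 1)) : i ≤ peakSwap x i := by
  rw [peakSwap_apply, peakSwapFun]; split_ifs <;> omega

theorem abs_peakSwap_apply_sub_le (i : ℤ) : |peakSwap x i - i| ≤ 1 :=
  abs_sub_le_iff.2 ⟨by linarith [peakSwap_apply_le (x := x) i],
    by linarith [sub_one_le_peakSwap_apply (x := x) i]⟩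

end Peaks

theorem commute_addRight_iff {g : Perm ℤ} {n : ℤ} :
    Commute g (Equiv.addRight n) ↔ ∀ i, g (i + n) = g i + n := by
  simp [Commute, SemiconjBy, Perm.ext_iff]

theorem isPeak_add_iff {x : Perm ℤ} {n : ℤ} (hx : Commute x (Equiv.addRight n)) (i : ℤ) :
    IsPeak x (i + n) ↔ IsPeak x i := by
  rw [commute_addRight_iff] at hx
  simp only [IsPeak, show i + n - 1 = i - 1 + n by ring, show i + n + 1 = i + 1 + n by ring, hx,
    add_lt_add_iff_right]

theorem commute_peakSwap {x : Perm ℤ} {n : ℤ} (hx : Commute x (Equiv.addRight n)) :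
    Commute (peakSwap x) (Equiv.addRight n) := by
  refine commute_addRight_iff.2 fun i => ?_
  simp only [peakSwap_apply, peakSwapFun]
  rw [show i + n - 1 = i - 1 + n by ring, isPeak_add_iff hx, isPeak_add_iff hx]
  split_ifs <;> ring

noncomputable def sortStep (x : Perm ℤ) : Perm ℤ := x * peakSwap x

theorem sortStep_apply (x : Perm ℤ) (i : ℤ) : sortStep x i = x (peakSwap x i) := rfl

theorem commute_sortStep {x : Perm ℤ} {n : ℤ} (hx : Commute x (Equiv.addRight n)) :
    Commute (sortStep x) (Equiv.addRight n) :=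
  hx.mul_left (commute_peakSwap hx)

noncomputable def potential (x : ℤ → ℤ) (a b : ℤ) : ℤ := x a - x b + #{k ∈ Ioo a b | x k < x a}

theorem potential_pos {x : ℤ → ℤ} {a b : ℤ} (h : x b < x a) : 0 < potential x a b := by
  unfold potential; omega

theorem potential_le_of_abs_sub_le {x : ℤ → ℤ} {w : ℤ} (hx : ∀ i, |x i - i| ≤ w) {a b : ℤ}
    (hab : a < b) : potential x a b ≤ 2 * w - 1 := by
  have hcard : (#{k ∈ Ioo a b | x k < x a} : ℤ) ≤ b - a - 1 := by
    have := (card_filter_le (Ioo a b) fun k => x k < x a)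
    rw [Int.card_Ioo] at this
    omega
  have ha := abs_le.1 (hx a)
  have hb := abs_le.1 (hx b)
  unfold potential
  omega

section SortStep

variable (x : Perm ℤ) {i j : ℤ}

/- An inversion `(i, j)` of `sortStep x` is traced back to an inversion `(a, b)` of `x` with
`b ∈ {j, j + 1}` and `a ∈ {i - 1, i, i + 1}`: `peakSwap x` sends the positions counted in the
potential of `(i, j)`, except possibly one position `e`, to positions counted for `(a, b)`.
Losing `e` is paid for by `x b < sortStep x j`; the unit gain comes from `sortStep x i < x a`
or from a position `p` counted for `(a, b)` that lies outside the image. -/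
theorem exists_right_end :
    ∃ b e, j ≤ b ∧ x b ≤ sortStep x j ∧ (∀ k ∈ Ioo i j, k ≠ e → peakSwap x k < b) ∧
      (x b < sortStep x j ∨ e ∉ Ioo i j) := by
  by_cases hj : IsPeak x (j - 1)
  · have hτj : peakSwap x j = j - 1 := peakSwapFun_of_isPeak_sub_one hj
    have hlt : x j < sortStep x j := by simpa [sortStep_apply, hτj] using hj.2
    refine ⟨j, j - 1, le_rfl, hlt.le, fun k hk hke => ?_, Or.inl hlt⟩
    have hne : peakSwap x k ≠ j := fun h => hke (by rw [peakSwap_eq_iff.1 h, hτj])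
    have := peakSwap_apply_le (x := x) k
    have := (mem_Ioo.1 hk).2
    omega
  · refine ⟨peakSwap x j, i, le_peakSwap_apply hj, le_rfl, fun k hk _ => ?_, Or.inr (by simp)⟩
    have hne : peakSwap x k ≠ peakSwap x j := fun h =>
      (mem_Ioo.1 hk).2.ne ((peakSwap x).injective h)
    have := peakSwap_apply_le (x := x) k
    have := le_peakSwap_apply hj
    have := (mem_Ioo.1 hk).2
    omega

theorem exists_left_end {b : ℤ} (hib : i < b) (hxb : x b < sortStep x i) :
    ∃ a, a < b ∧ sortStep x i ≤ x a ∧ (∀ m, i ≤ m → m ≤ a → sortStep x i ≤ x m) ∧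
      (sortStep x i < x a ∨ ∃ p ∈ {k ∈ Ioo a b | x k < x a}, peakSwap x p ∉ Ioo i j) := by
  by_cases hpeak : IsPeak x i
  · have hτi : peakSwap x i = i + 1 := peakSwapFun_of_isPeak hpeak
    have hτi' : peakSwap x (i + 1) = i := peakSwap_eq_iff.2 hτi.symm
    have hyi : sortStep x i = x (i + 1) := by rw [sortStep_apply, hτi]
    have hb : i + 1 < b := lt_of_le_of_ne hib fun h => by rw [← h, hyi] at hxb; exact hxb.false
    refine ⟨i, by omega, hyi ▸ hpeak.2.le, fun m hm hm' => ?_, Or.inr ⟨i + 1, ?_, ?_⟩⟩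
    · rw [le_antisymm hm' hm, hyi]; exact hpeak.2.le
    · simp [hb, hpeak.2]
    · simp [hτi']
  by_cases hdesc : x i < x (i - 1)
  · have hτi : peakSwap x i ≤ i := peakSwap_apply_le_self hpeak
    have hτi' := sub_one_le_peakSwap_apply (x := x) i
    have hyi : sortStep x i ≤ x (i - 1) := by
      rcases (show peakSwap x i = i - 1 ∨ peakSwap x i = i by omega) with h | h <;>
        simp [sortStep_apply, h, hdesc.le]
    refine ⟨i - 1, by omega, hyi, fun m hm hm' => by omega, Or.inr ⟨i, ?_, ?_⟩⟩
    · simp [hib, hdesc]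
    · simp [mem_Ioo]; omega
  · have hasc : x (i - 1) < x i := lt_of_le_of_ne (not_lt.1 hdesc) (x.injective.ne (by omega))
    have hτi : peakSwap x i = i :=
      peakSwapFun_of_not_isPeak hpeak fun h => hdesc (by simpa using h.2)
    have hyi : sortStep x i = x i := by rw [sortStep_apply, hτi]
    have hnext : x i < x (i + 1) :=
      lt_of_le_of_ne (not_lt.1 fun h => hpeak ⟨hasc, h⟩) (x.injective.ne (by omega))
    have hb : i + 1 < b := lt_of_le_of_ne hib fun h => by
      rw [← h, hyi] at hxb; exact lt_asymm hxb hnext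
    refine ⟨i + 1, hb, by rw [hyi]; exact hnext.le, fun m hm hm' => ?_, Or.inl (hyi ▸ hnext)⟩
    rcases (show m = i ∨ m = i + 1 by omega) with rfl | rfl
    · exact hyi.le
    · exact hyi ▸ hnext.le

theorem image_peakSwap_subset {a b e : ℤ}
    (hleft : ∀ m, i ≤ m → m ≤ a → sortStep x i ≤ x m) (hxa : sortStep x i ≤ x a)
    (hright : ∀ k ∈ Ioo i j, k ≠ e → peakSwap x k < b) :
    ({k ∈ Ioo i j | sortStep x k < sortStep x i}.erase e).image (peakSwap x) ⊆
      {k ∈ Ioo a b | x k < x a} := by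
  intro m hm
  obtain ⟨k, hk, rfl⟩ := mem_image.1 hm
  obtain ⟨hke, hk⟩ := mem_erase.1 hk
  obtain ⟨hkij, hyk⟩ := mem_filter.1 hk
  have hik : i ≤ peakSwap x k := by
    have := sub_one_le_peakSwap_apply (x := x) k
    have := (mem_Ioo.1 hkij).1
    omega
  have ha : a < peakSwap x k := not_le.1 fun h => (hleft _ hik h).not_gt hyk
  simp only [mem_filter, mem_Ioo]
  exact ⟨⟨ha, hright k hkij hke⟩, hyk.trans_le hxa⟩

theorem exists_potential_lt (hij : i < j) (hinv : sortStep x j < sortStep x i) :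
    ∃ a b, a < b ∧ x b < x a ∧ potential (sortStep x) i j < potential x a b := by
  obtain ⟨b, e, hjb, hxb, hright, he⟩ := exists_right_end x (i := i) (j := j)
  obtain ⟨a, hab, hxa, hleft, hbonus⟩ :=
    exists_left_end x (j := j) (hij.trans_le hjb) (hxb.trans_lt hinv)
  have hsub := image_peakSwap_subset x hleft hxa hright
  refine ⟨a, b, hab, by omega, ?_⟩
  unfold potential
  set N := {k ∈ Ioo i j | sortStep x k < sortStep x i}
  set T := {k ∈ Ioo a b | x k < x a}
  have himage : #((N.erase e).image (peakSwap x)) = #(N.erase e) :=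
    card_image_of_injective _ (peakSwap x).injective
  have hN : #N ≤ #(N.erase e) + 1 := by
    have := pred_card_le_card_erase (s := N) (a := e)
    omega
  have hN' : x b < sortStep x j ∨ #(N.erase e) = #N := he.imp_right fun he =>
    congrArg card (erase_eq_of_notMem fun h => he (mem_filter.1 h).1)
  have hT : #(N.erase e) ≤ #T := himage ▸ card_le_card hsub
  have hT' : sortStep x i < x a ∨ #(N.erase e) < #T := by
    refine hbonus.imp_right fun ⟨p, hpT, hp⟩ => himage ▸ card_lt_card ?_
    refine (ssubset_iff_of_subset hsub).2 ⟨p, hpT, fun hpN => ?_⟩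
    obtain ⟨k, hk, rfl⟩ := mem_image.1 hpN
    exact hp (by simpa using (mem_filter.1 (mem_erase.1 hk).2).1)
  omega

end SortStep

def IsBandOneInvolution (n : ℤ) (σ : Perm ℤ) : Prop :=
  Commute σ (Equiv.addRight n) ∧ σ * σ = 1 ∧ ∀ i, |σ i - i| ≤ 1

theorem isBandOneInvolution_peakSwap {x : Perm ℤ} {n : ℤ} (hx : Commute x (Equiv.addRight n)) :
    IsBandOneInvolution n (peakSwap x) :=
  ⟨commute_peakSwap hx, peakSwap_mul_self, abs_peakSwap_apply_sub_le⟩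

theorem commute_addRight_addRight (k n : ℤ) :
    Commute (Equiv.addRight k) (Equiv.addRight n) :=
  Perm.ext fun i => add_right_comm i n k

theorem IsBandOneInvolution.conj_addRight {n : ℤ} {σ : Perm ℤ} (hσ : IsBandOneInvolution n σ)
    (k : ℤ) : IsBandOneInvolution n (Equiv.addRight k * σ * (Equiv.addRight k)⁻¹) := by
  have hk := commute_addRight_addRight k n
  refine ⟨(hk.mul_left hσ.1).mul_left hk.inv_left, ?_, fun i => ?_⟩
  · simp only [mul_assoc, inv_mul_cancel_left, ← mul_assoc σ σ, hσ.2.1, one_mul, mul_inv_cancel]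
  · convert hσ.2.2 (i - k) using 2
    simp [Perm.mul_apply, sub_eq_add_neg]
    ring

theorem eq_addRight_of_strictMono {x : Perm ℤ} (hx : StrictMono x) :
    x = Equiv.addRight (x 0) := by
  have hsucc (i : ℤ) : x (i + 1) = x i + 1 := by
    simpa [Order.succ_eq_add_one] using (hx.orderIsoOfSurjective x x.surjective).map_succ i
  ext i
  induction i using Int.induction_on with
  | zero => simp
  | succ i ih => rw [hsucc, ih]; simp; ring
  | pred i ih =>
    have := hsucc (-i - 1)
    rw [sub_add_cancel] at this
    simp at ih ⊢
    omega

theorem exists_factorization_of_potential_le {n : ℤ} (t : ℕ) (x : Perm ℤ)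
    (hx : Commute x (Equiv.addRight n))
    (hpot : ∀ a b, a < b → x b < x a → potential x a b ≤ t) :
    ∃ (σ : Fin t → Perm ℤ) (k : ℤ),
      (∀ j, IsBandOneInvolution n (σ j)) ∧ x = (List.ofFn σ).prod * Equiv.addRight k := by
  induction t generalizing x with
  | zero =>
    have hx : StrictMono x := fun a b hab => by
      by_contra h
      have hba : x b < x a := lt_of_le_of_ne (not_lt.1 h) (x.injective.ne hab.ne')
      exact (hpot a b hab hba).not_gt (potential_pos hba)
    exact ⟨Fin.elim0, x 0, fun j => j.elim0, by simpa using eq_addRight_of_strictMono hx⟩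
  | succ t ih =>
    obtain ⟨σ, k, hσ, hstep⟩ := ih (sortStep x) (commute_sortStep hx) fun i j hij hinv => by
      obtain ⟨a, b, hab, hba, hlt⟩ := exists_potential_lt x hij hinv
      have := hpot a b hab hba
      push_cast at this
      omega
    refine ⟨Fin.snoc σ (Equiv.addRight k * peakSwap x * (Equiv.addRight k)⁻¹), k, ?_, ?_⟩
    · refine Fin.lastCases ?_ fun j => ?_
      · simpa using (isBandOneInvolution_peakSwap hx).conj_addRight k
      · simpa using hσ j
    · rw [List.ofFn_succ', List.prod_concat]
      simp only [Fin.snoc_castSucc, Fin.snoc_last]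
      calc x = sortStep x * peakSwap x := by rw [sortStep, mul_assoc, peakSwap_mul_self, mul_one]
        _ = _ := by rw [hstep]; group

theorem periodic_apply_sub_self {g : Perm ℤ} {n : ℤ} (hg : Commute g (Equiv.addRight n)) :
    Function.Periodic (fun i => g i - i) n := fun i => by
  simp only [commute_addRight_iff.1 hg]; ring

theorem apply_emod_emod {g : Perm ℤ} {n : ℤ} (hg : Commute g (Equiv.addRight n)) (a : ℤ) :
    g (a % n) % n = g a % n := by
  have := (periodic_apply_sub_self hg).sub_int_mul_eq (x := a) (a / n)
  have hga : g (a % n) = g a - a / n * n := by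
    rw [Int.emod_def, mul_comm n]
    simp only [Int.cast_id] at this
    linarith
  rw [hga, Int.sub_mul_emod_self_right]

theorem sum_Ico_comp_of_commute {M : Type*} [AddCommMonoid M] {g : Perm ℤ} {n : ℤ} (hn : 0 < n)
    (hg : Commute g (Equiv.addRight n)) {F : ℤ → M} (hF : Function.Periodic F n) :
    ∑ r ∈ Ico 0 n, F (g r) = ∑ r ∈ Ico 0 n, F r := by
  have hmem (a : ℤ) : a % n ∈ Ico 0 n :=
    mem_Ico.2 ⟨Int.emod_nonneg a hn.ne', Int.emod_lt_of_pos a hn⟩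
  have hmod {r : ℤ} (hr : r ∈ Ico 0 n) : r % n = r :=
    Int.emod_eq_of_lt (mem_Ico.1 hr).1 (mem_Ico.1 hr).2
  refine sum_nbij' (fun r => g r % n) (fun r => g⁻¹ r % n) (fun r _ => hmem _) (fun r _ => hmem _)
    (fun r hr => ?_) (fun r hr => ?_) fun r _ => ?_
  · rw [apply_emod_emod hg.inv_left]; simp [hmod hr]
  · rw [apply_emod_emod hg]; simp [hmod hr]
  · simpa [Int.emod_def, mul_comm n] using (hF.sub_int_mul_eq (x := g r) (g r / n)).symm

noncomputable def displacementSum (n : ℤ) (g : Perm ℤ) : ℤ := ∑ r ∈ Ico 0 n, (g r - r)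

theorem displacementSum_mul {n : ℤ} (hn : 0 < n) {g τ : Perm ℤ}
    (hg : Commute g (Equiv.addRight n)) (hτ : Commute τ (Equiv.addRight n)) :
    displacementSum n (g * τ) = displacementSum n g + displacementSum n τ := by
  unfold displacementSum
  rw [← sum_Ico_comp_of_commute hn hτ (periodic_apply_sub_self hg), ← sum_add_distrib]
  exact sum_congr rfl fun r _ => by simp only [Perm.mul_apply]; ring

theorem displacementSum_eq_zero_of_mul_self {n : ℤ} (hn : 0 < n) {σ : Perm ℤ}
    (hσ : Commute σ (Equiv.addRight n)) (hσσ : σ * σ = 1) : displacementSum n σ = 0 := by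
  have h := displacementSum_mul hn hσ hσ
  have h1 : displacementSum n 1 = 0 := by simp [displacementSum]
  rw [hσσ, h1] at h
  omega

theorem displacementSum_list_prod_eq_zero {n : ℤ} (hn : 0 < n) {l : List (Perm ℤ)}
    (hl : ∀ σ ∈ l, IsBandOneInvolution n σ) : displacementSum n l.prod = 0 := by
  induction l with
  | nil => simp [displacementSum]
  | cons σ l ih =>
    simp only [List.forall_mem_cons] at hl
    rw [List.prod_cons, displacementSum_mul hn hl.1.1
      (Commute.list_prod_left _ _ fun τ hτ => (hl.2 τ hτ).1),
      displacementSum_eq_zero_of_mul_self hn hl.1.1 hl.1.2.1, ih hl.2, add_zero]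

theorem displacementSum_addRight {n : ℤ} (hn : 0 ≤ n) (k : ℤ) :
    displacementSum n (Equiv.addRight k) = n * k := by
  simp [displacementSum, Int.toNat_of_nonneg hn]

theorem abs_displacementSum_le {n w : ℤ} (hn : 0 ≤ n) {g : Perm ℤ} (hg : ∀ i, |g i - i| ≤ w) :
    |displacementSum n g| ≤ n * w :=
  calc |displacementSum n g| ≤ ∑ r ∈ Ico 0 n, |g r - r| := abs_sum_le_sum_abs _ _
    _ ≤ ∑ r ∈ Ico 0 n, w := sum_le_sum fun r _ => hg r
    _ = n * w := by simp [Int.toNat_of_nonneg hn]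

theorem abs_le_of_eq_prod_mul_addRight {n : ℤ} (hn : 0 < n) {l : List (Perm ℤ)}
    (hl : ∀ σ ∈ l, IsBandOneInvolution n σ) {k w : ℤ}
    (hband : ∀ i, |(l.prod * Equiv.addRight k) i - i| ≤ w) : |k| ≤ w := by
  have hsum : displacementSum n (l.prod * Equiv.addRight k) = n * k := by
    rw [displacementSum_mul hn (Commute.list_prod_left _ _ fun τ hτ => (hl τ hτ).1)
      (commute_addRight_addRight k n), displacementSum_list_prod_eq_zero hn hl,
      displacementSum_addRight hn.le, zero_add]
  have := abs_displacementSum_le hn.le hband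
  rw [hsum, abs_mul, abs_of_pos hn] at this
  exact le_of_mul_le_mul_left this hn

theorem addRight_one_zpow (k : ℤ) : Equiv.addRight (1 : ℤ) ^ k = Equiv.addRight k := by
  induction k using Int.induction_on with
  | zero => ext; simp
  | succ k ih => ext; simp [zpow_add_one, ih, Perm.mul_apply]; ring
  | pred k ih => ext; simp [zpow_sub_one, ih, Perm.mul_apply]; ring

end PeriodicStrang

open PeriodicStrang in
theorem periodic_strang_general (n w : ℕ) (hn : 1 ≤ n) (f : Equiv.Perm ℤ)
    (hper : ∀ i : ℤ, f (i + n) = f i + n)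
    (hband : ∀ i : ℤ, |f i - i| ≤ (w : ℤ)) :
    ∃ (σ : Fin (2 * w - 1) → Equiv.Perm ℤ) (k : ℤ),
      (∀ j, (∀ i : ℤ, (σ j) (i + n) = (σ j) i + n) ∧
        σ j * σ j = 1 ∧ (∀ i : ℤ, |(σ j) i - i| ≤ 1)) ∧
      |k| ≤ (w : ℤ) ∧
      f = (List.ofFn σ).prod * (Equiv.addRight (1 : ℤ)) ^ k := by
  obtain ⟨σ, k, hσ, rfl⟩ := exists_factorization_of_potential_le (n := n) (2 * w - 1) f
    (commute_addRight_iff.2 hper) fun a b hab _ => by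
      have := potential_le_of_abs_sub_le hband hab
      omega
  refine ⟨σ, k, fun j => ⟨commute_addRight_iff.1 (hσ j).1, (hσ j).2⟩,
    abs_le_of_eq_prod_mul_addRight (by omega) (List.forall_mem_ofFn_iff.2 hσ) hband,
    by rw [addRight_one_zpow]⟩

/-- an `n`-periodic bijection of `ℤ` of bandwidth `w` factors as
`σ¹ ∘ ⋯ ∘ σ^{2w−1} ∘ Sᵏ` with each `σʲ` an `n`-periodic involution of
bandwidth 1 and `|k| ≤ w`, where `S(i) = i + 1`. -/
theorem periodic_strang (n w : ℕ) (hn : 1 ≤ n) (hw : 1 ≤ w) (f : Equiv.Perm ℤ)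
    (hper : ∀ i : ℤ, f (i + n) = f i + n)
    (hband : ∀ i : ℤ, |f i - i| ≤ (w : ℤ)) :
    ∃ (σ : Fin (2 * w - 1) → Equiv.Perm ℤ) (k : ℤ),
      (∀ j, (∀ i : ℤ, (σ j) (i + n) = (σ j) i + n) ∧
        σ j * σ j = 1 ∧ (∀ i : ℤ, |(σ j) i - i| ≤ 1)) ∧
      |k| ≤ (w : ℤ) ∧
      f = (List.ofFn σ).prod * (Equiv.addRight (1 : ℤ)) ^ k :=
  periodic_strang_general n w hn f hper hband
end

section
/- Let n ≥ 1, w ≥ 0, and let f : ℤ → ℤ be an n-periodic bijection of bandwidth w, i.e., |f(i) − i| ≤ w for all i. Then its shifting index satisfies |si(f)| ≤ w, where si(f) = #{i : 1 ≤ i ≤ n, f(i) ≥ n+1} − #{i : n+1 ≤ i ≤ 2n, f(i) ≤ n}. -/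
/-- The shifting index of an `n`-periodic bijection `f : ℤ → ℤ`:
`#{i ∈ {1,…,n} : f(i) ≥ n+1} − #{i ∈ {n+1,…,2n} : f(i) ≤ n}`. -/
noncomputable def shiftingIndex (n : ℕ) (f : ℤ → ℤ) : ℤ :=
  (((Finset.Icc (1 : ℤ) n).filter fun i => (n : ℤ) + 1 ≤ f i).card : ℤ) -
  (((Finset.Icc ((n : ℤ) + 1) (2 * n)).filter fun i => f i ≤ (n : ℤ)).card : ℤ)

/-! A map moving every point by at most `w` can carry at most `w` points of an interval past
its right end (they all lie in `(b - w, b]`) or past its left end (they all lie in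
`[a, a + w)`). The two counts in the shifting index are of this kind, so each lies in `[0, w]`
and so does the absolute value of their difference. -/

namespace Int

variable {f : ℤ → ℤ} {w : ℕ}

theorem card_filter_Icc_right_lt_apply_le (hband : ∀ i, |f i - i| ≤ w) (a b : ℤ) :
    ((Finset.Icc a b).filter fun i => b < f i).card ≤ w := by
  calc ((Finset.Icc a b).filter fun i => b < f i).card
      ≤ (Finset.Ioc (b - w) b).card := by
        refine Finset.card_le_card fun i hi => ?_
        simp only [Finset.mem_filter, Finset.mem_Icc, Finset.mem_Ioc] at hi ⊢
        have := (abs_le.mp (hband i)).2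
        omega
    _ = w := by simp

theorem card_filter_Icc_apply_lt_left_le (hband : ∀ i, |f i - i| ≤ w) (a b : ℤ) :
    ((Finset.Icc a b).filter fun i => f i < a).card ≤ w := by
  calc ((Finset.Icc a b).filter fun i => f i < a).card
      ≤ (Finset.Ico a (a + w)).card := by
        refine Finset.card_le_card fun i hi => ?_
        simp only [Finset.mem_filter, Finset.mem_Icc, Finset.mem_Ico] at hi ⊢
        have := (abs_le.mp (hband i)).1
        omega
    _ = w := by simp

end Int

theorem abs_shiftingIndex_le_general (n : ℕ) (w : ℕ) (f : ℤ → ℤ)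
    (hband : ∀ i : ℤ, |f i - i| ≤ (w : ℤ)) :
    |shiftingIndex n f| ≤ (w : ℤ) := by
  have hup := Int.card_filter_Icc_right_lt_apply_le hband 1 n
  have hdown := Int.card_filter_Icc_apply_lt_left_le hband ((n : ℤ) + 1) (2 * n)
  simp only [Int.lt_iff_add_one_le] at hup
  simp only [Int.lt_add_one_iff] at hdown
  exact abs_sub_le_of_nonneg_of_le (Nat.cast_nonneg _) (by exact_mod_cast hup)
    (Nat.cast_nonneg _) (by exact_mod_cast hdown)

/-- an `n`-periodic bijection of bandwidth `w` has shifting index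
of absolute value at most `w`. -/
theorem abs_shiftingIndex_le (n : ℕ) (hn : 1 ≤ n) (w : ℕ) (f : ℤ → ℤ)
    (hf : Function.Bijective f) (hper : ∀ i : ℤ, f (i + n) = f i + n)
    (hband : ∀ i : ℤ, |f i - i| ≤ (w : ℤ)) :
    |shiftingIndex n f| ≤ (w : ℤ) :=
  abs_shiftingIndex_le_general n w f hband
end

section
/- Let n ≥ 3 and let π be a permutation of ℤ/nℤ of cyclic bandwidth 1, i.e., for every i the cyclic distance between π(i) and i is at most 1. Then π = S, or π = S⁻¹, or π is an involution (π ∘ π = id), where S is the cyclic shift S(i) = i + 1 (mod n). -/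
/-!
A permutation of cyclic bandwidth 1 sends each point to itself or to a neighbour. If `π i = i + 1`
but `π (i + 1) ≠ i`, injectivity forces `π (i + 1) = i + 2`, and inductively `π` shifts the whole
forward orbit `i, i + 1, i + 2, …`, which is all of `ℤ/nℤ`; so `π = S`. Applying this to `π⁻¹`
handles `π i = i - 1`, and if neither happens anywhere then `π ∘ π` fixes every point.
-/

/-- The cyclic distance between residues `a, b : ZMod n`: the minimum of `|r|`
over integers `r ≡ a − b (mod n)`. -/
def cyclicDist (n : ℕ) (a b : ZMod n) : ℕ :=
  min (a - b).val (n - (a - b).val)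

-- `NeZero n` is essential: `cyclicDist 0` vanishes identically on `ZMod 0 = ℤ`.
theorem eq_sub_one_or_eq_or_eq_add_one_of_cyclicDist_le_one {n : ℕ} [NeZero n] {a b : ZMod n}
    (h : cyclicDist n a b ≤ 1) : a = b - 1 ∨ a = b ∨ a = b + 1 := by
  have hval : (((a - b).val : ℕ) : ZMod n) = a - b := ZMod.natCast_zmod_val _
  rcases min_le_iff.mp h with h | h
  · interval_cases hv : (a - b).val
    · right; left
      linear_combination -hval
    · right; right
      linear_combination -hval
  · left
    have hv : (a - b).val = n - 1 := by have := ZMod.val_lt (a - b); omega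
    rw [hv, Nat.cast_sub NeZero.one_le, ZMod.natCast_self] at hval
    linear_combination -hval

def MovesAtMostOne {G : Type*} [AddGroupWithOne G] (π : Equiv.Perm G) : Prop :=
  ∀ x, π x = x - 1 ∨ π x = x ∨ π x = x + 1

namespace MovesAtMostOne

variable {G : Type*} [AddGroupWithOne G] {π : Equiv.Perm G}

theorem inv (hπ : MovesAtMostOne π) : MovesAtMostOne π⁻¹ := by
  intro y
  obtain ⟨x, rfl⟩ := π.surjective y
  rw [show π⁻¹ (π x) = x from π.symm_apply_apply x]
  rcases hπ x with h | h | h <;> rw [h]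
  · exact Or.inr (Or.inr (sub_add_cancel x 1).symm)
  · exact Or.inr (Or.inl rfl)
  · exact Or.inl (add_sub_cancel_right x 1).symm

theorem apply_add_one_of_apply_eq_add_one {j : G} (hπ : MovesAtMostOne π) (hj : π j = j + 1)
    (hj' : π (j + 1) ≠ j) : π (j + 1) = j + 1 + 1 ∧ π (j + 1 + 1) ≠ j + 1 := by
  have hnext : π (j + 1) = j + 1 + 1 := by
    rcases hπ (j + 1) with h | h | h
    · exact absurd (h.trans (add_sub_cancel_right j 1)) hj'
    · have hfix : j + 1 = j := π.injective (h.trans hj.symm)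
      rw [h]
      exact (congrArg (· + 1) hfix).symm
    · exact h
  refine ⟨hnext, fun h ↦ hj' ?_⟩
  have hper : j + 1 + 1 = j := π.injective (h.trans hj.symm)
  rw [hnext, hper]

theorem apply_add_natCast {i : G} (hπ : MovesAtMostOne π) (hi : π i = i + 1)
    (hi' : π (i + 1) ≠ i) (k : ℕ) : π (i + k) = i + k + 1 := by
  suffices h : π (i + k) = i + k + 1 ∧ π (i + k + 1) ≠ i + k from h.1
  induction k with
  | zero => simpa using ⟨hi, hi'⟩
  | succ k ih =>
    rw [Nat.cast_succ, ← add_assoc]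
    exact hπ.apply_add_one_of_apply_eq_add_one ih.1 ih.2

end MovesAtMostOne

theorem MovesAtMostOne.eq_addRight_one {n : ℕ} [NeZero n] {π : Equiv.Perm (ZMod n)} {i : ZMod n}
    (hπ : MovesAtMostOne π) (hi : π i = i + 1) (hi' : π (i + 1) ≠ i) :
    π = Equiv.addRight 1 := by
  ext j
  have h := hπ.apply_add_natCast hi hi' (j - i).val
  rwa [ZMod.natCast_zmod_val, add_sub_cancel] at h

/-- for `n ≥ 3`, a permutation of `ℤ/nℤ` of cyclic bandwidth 1 is
the shift `S`, or `S⁻¹`, or an involution. -/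
theorem cyclic_bandwidth_one_trichotomy (n : ℕ) (hn : 3 ≤ n)
    (π : Equiv.Perm (ZMod n)) (hπ : ∀ i : ZMod n, cyclicDist n (π i) i ≤ 1) :
    π = Equiv.addRight (1 : ZMod n) ∨ π = (Equiv.addRight (1 : ZMod n))⁻¹ ∨
      π * π = 1 := by
  have : NeZero n := ⟨by omega⟩
  have hmove : MovesAtMostOne π := fun i ↦
    eq_sub_one_or_eq_or_eq_add_one_of_cyclicDist_le_one (hπ i)
  by_cases hinv : π * π = 1
  · exact Or.inr (Or.inr hinv)
  obtain ⟨i, hi⟩ : ∃ i, π (π i) ≠ i := by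
    by_contra! h
    exact hinv (Equiv.ext h)
  rcases hmove i with h | h | h
  · refine Or.inr (Or.inl ?_)
    rw [← inv_inv π, hmove.inv.eq_addRight_one (i := i - 1) ?_ ?_]
    · rw [sub_add_cancel, Equiv.Perm.inv_eq_iff_eq, h]
    · rw [sub_add_cancel, ← h, Ne, Equiv.Perm.inv_eq_iff_eq]
      exact fun h' ↦ hi h'.symm
  · exact absurd (by rw [h, h]) hi
  · exact Or.inl (hmove.eq_addRight_one h (h ▸ hi))
end
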